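/- arXiv:1907.09552 — 4 statements merged into one kernel-verified Lean document; each statement's English description precedes it below -/
import Mathlib

section
/- Let A ⊆ Ω = {0,1}^m be any event. Then the function θ ↦ P_θ(A) is differentiable on [0,1] and its derivative is d/dθ P_θ(A) = E_θ[N_A⁺ − N_A⁻] (the Margulis–Russo formula in Menshikov's form). -/
open Finset

/-- The weight (probability) of a configuration `x ∈ {0,1}^m` under the product
Bernoulli measure with success probability `θ`. -/
noncomputable def bernoulliWeight (m : ℕ) (θ : ℝ) (x : Fin m → Bool) : ℝ :=
  ∏ i : Fin m, if x i then θ else 1 - θ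

/-- `P_θ(A)`: probability of the event `A ⊆ {0,1}^m` under the product Bernoulli
measure with parameter `θ`. -/
noncomputable def bernoulliProb (m : ℕ) (θ : ℝ) (A : Finset (Fin m → Bool)) : ℝ :=
  ∑ x ∈ A, bernoulliWeight m θ x

/-- `N_A⁺(x)`: the number of `(+)`-pivotal coordinates of `x` for the event `A`. -/
def Nplus (m : ℕ) (A : Finset (Fin m → Bool)) (x : Fin m → Bool) : ℕ :=
  (Finset.univ.filter fun i : Fin m =>
    Function.update x i true ∈ A ∧ Function.update x i false ∉ A).card

/-- `N_A⁻(x)`: the number of `(−)`-pivotal coordinates of `x` for the event `A`. -/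
def Nminus (m : ℕ) (A : Finset (Fin m → Bool)) (x : Fin m → Bool) : ℕ :=
  (Finset.univ.filter fun i : Fin m =>
    Function.update x i false ∈ A ∧ Function.update x i true ∉ A).card

/-- product over all coordinates except `i` -/
noncomputable def MR_W (m : ℕ) (θ : ℝ) (i : Fin m) (x : Fin m → Bool) : ℝ :=
  ∏ j ∈ Finset.univ.erase i, if x j then θ else 1 - θ

lemma MR_W_update (m : ℕ) (θ : ℝ) (i : Fin m) (x : Fin m → Bool) (b : Bool) :
    MR_W m θ i (Function.update x i b) = MR_W m θ i x := by
  refine Finset.prod_congr rfl fun j hj => ?_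
  rw [Function.update_of_ne (Finset.mem_erase.mp hj).1]

lemma MR_key (m : ℕ) (A : Finset (Fin m → Bool)) (θ : ℝ) (i : Fin m) :
    (∑ x : Fin m → Bool, (if x ∈ A then (1:ℝ) else 0) *
        ((if x i then (1:ℝ) else -1) * MR_W m θ i x))
    = ∑ x : Fin m → Bool,
        ((if Function.update x i true ∈ A then (1:ℝ) else 0)
          - (if Function.update x i false ∈ A then (1:ℝ) else 0))
          * ((if x i then θ else 1 - θ) * MR_W m θ i x) := by
  set g : (Fin m → Bool) → ℝ := fun x =>
    (if x ∈ A then (1:ℝ) else 0) * ((if x i then (1:ℝ) else -1) * MR_W m θ i x) with hg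
  set h : (Fin m → Bool) → ℝ := fun x =>
    ((if Function.update x i true ∈ A then (1:ℝ) else 0)
      - (if Function.update x i false ∈ A then (1:ℝ) else 0))
      * ((if x i then θ else 1 - θ) * MR_W m θ i x) with hh
  set σ : (Fin m → Bool) → (Fin m → Bool) := fun x => Function.update x i (!x i) with hσdef
  have hσ : Function.Involutive σ := by
    intro x; funext j
    by_cases hji : j = i
    · subst hji; simp [σ]
    · simp [σ, Function.update_of_ne hji]
  have hpt : ∀ x, g x + g (σ x) = h x + h (σ x) := by
    intro x
    have hW0 : ∀ b, MR_W m θ i (Function.update x i b) = MR_W m θ i x :=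
      MR_W_update m θ i x
    cases hx : x i with
    | true =>
      have h1 : Function.update x i true = x := by
        rw [← hx]; exact Function.update_eq_self i x
      simp only [hg, hh, hσdef, hx, Bool.not_true, Function.update_idem,
        Function.update_self, hW0, h1, if_true]
      norm_num
      split_ifs <;> ring
    | false =>
      have h1 : Function.update x i false = x := by
        rw [← hx]; exact Function.update_eq_self i x
      simp only [hg, hh, hσdef, hx, Bool.not_false, Function.update_idem,
        Function.update_self, hW0, h1, if_false]
      norm_num
      split_ifs <;> ring
  have hre : (∑ x : Fin m → Bool, g (σ x)) = ∑ x : Fin m → Bool, g x :=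
    Fintype.sum_bijective σ hσ.bijective _ _ (fun x => rfl)
  have hre' : (∑ x : Fin m → Bool, h (σ x)) = ∑ x : Fin m → Bool, h x :=
    Fintype.sum_bijective σ hσ.bijective _ _ (fun x => rfl)
  have := Finset.sum_congr (rfl : (Finset.univ : Finset (Fin m → Bool)) = _)
    (fun x _ => hpt x)
  rw [Finset.sum_add_distrib, Finset.sum_add_distrib, hre, hre'] at this
  linarith

/-- **Margulis–Russo formula (Menshikov's form).**  For any event
`A ⊆ Ω = {0,1}^m`, the map `θ ↦ P_θ(A)` is differentiable on `[0,1]` with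
derivative `E_θ[N_A⁺ − N_A⁻]`. -/
theorem margulis_russo (m : ℕ) (A : Finset (Fin m → Bool)) :
    ∀ θ ∈ Set.Icc (0 : ℝ) 1,
      HasDerivWithinAt (fun t : ℝ => bernoulliProb m t A)
        (∑ x : Fin m → Bool,
          ((Nplus m A x : ℝ) - (Nminus m A x : ℝ)) * bernoulliWeight m θ x)
        (Set.Icc (0 : ℝ) 1) θ := by
  intro θ _
  have hD : HasDerivAt (fun t : ℝ => bernoulliProb m t A)
      (∑ x ∈ A, ∑ i : Fin m, MR_W m θ i x * (if x i then (1:ℝ) else -1)) θ := by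
    apply HasDerivAt.fun_sum
    intro x _
    have := HasDerivAt.fun_finsetProd (u := (Finset.univ : Finset (Fin m)))
      (f := fun i t => if x i then t else 1 - t)
      (f' := fun i => if x i then (1:ℝ) else -1) (x := θ)
      (fun i _ => by
        cases hxi : x i
        · simpa [hxi] using (hasDerivAt_const θ (1:ℝ)).fun_sub (hasDerivAt_id' θ)
        · simpa [hxi] using hasDerivAt_id' θ)
    simpa [bernoulliWeight, MR_W, smul_eq_mul] using this
  have key : (∑ x : Fin m → Bool,
        ((Nplus m A x : ℝ) - (Nminus m A x : ℝ)) * bernoulliWeight m θ x)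
      = ∑ x ∈ A, ∑ i : Fin m, MR_W m θ i x * (if x i then (1:ℝ) else -1) := by
    have step1 : ∀ x : Fin m → Bool,
        ((Nplus m A x : ℝ) - (Nminus m A x : ℝ)) * bernoulliWeight m θ x
        = ∑ i : Fin m,
            ((if Function.update x i true ∈ A then (1:ℝ) else 0)
              - (if Function.update x i false ∈ A then (1:ℝ) else 0))
              * ((if x i then θ else 1 - θ) * MR_W m θ i x) := by
      intro x
      have hN : ((Nplus m A x : ℝ) - (Nminus m A x : ℝ))
          = ∑ i : Fin m,
              ((if Function.update x i true ∈ A then (1:ℝ) else 0)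
                - (if Function.update x i false ∈ A then (1:ℝ) else 0)) := by
        unfold Nplus Nminus
        rw [Finset.card_filter, Finset.card_filter]
        push_cast
        rw [← Finset.sum_sub_distrib]
        refine Finset.sum_congr rfl fun i _ => ?_
        by_cases h1 : Function.update x i true ∈ A <;>
          by_cases h0 : Function.update x i false ∈ A <;> simp [h1, h0]
      rw [hN, Finset.sum_mul]
      refine Finset.sum_congr rfl fun i _ => ?_
      congr 1
      exact (Finset.mul_prod_erase Finset.univ _ (Finset.mem_univ i)).symm
    calc (∑ x : Fin m → Bool,
          ((Nplus m A x : ℝ) - (Nminus m A x : ℝ)) * bernoulliWeight m θ x)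
        = ∑ x : Fin m → Bool, ∑ i : Fin m,
            ((if Function.update x i true ∈ A then (1:ℝ) else 0)
              - (if Function.update x i false ∈ A then (1:ℝ) else 0))
              * ((if x i then θ else 1 - θ) * MR_W m θ i x) :=
          Finset.sum_congr rfl fun x _ => step1 x
      _ = ∑ i : Fin m, ∑ x : Fin m → Bool,
            ((if Function.update x i true ∈ A then (1:ℝ) else 0)
              - (if Function.update x i false ∈ A then (1:ℝ) else 0))
              * ((if x i then θ else 1 - θ) * MR_W m θ i x) := Finset.sum_comm
      _ = ∑ i : Fin m, ∑ x : Fin m → Bool,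
            (if x ∈ A then (1:ℝ) else 0) *
              ((if x i then (1:ℝ) else -1) * MR_W m θ i x) :=
          Finset.sum_congr rfl fun i _ => (MR_key m A θ i).symm
      _ = ∑ x : Fin m → Bool, (if x ∈ A then (1:ℝ) else 0) *
            ∑ i : Fin m, (if x i then (1:ℝ) else -1) * MR_W m θ i x := by
          rw [Finset.sum_comm]
          exact Finset.sum_congr rfl fun x _ => (Finset.mul_sum _ _ _).symm
      _ = ∑ x ∈ A, ∑ i : Fin m, MR_W m θ i x * (if x i then (1:ℝ) else -1) := by
          simp only [ite_mul, one_mul, zero_mul]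
          rw [Finset.sum_ite_mem, Finset.univ_inter]
          refine Finset.sum_congr rfl fun x _ =>
            Finset.sum_congr rfl fun i _ => ?_
          cases hxi : x i <;> simp [hxi] <;> ring
  rw [key]
  exact hD.hasDerivWithinAt
end

section
/- For every n ∈ ℕ, every θ > 0 and every x ≥ 0, the Erlang distribution function admits the representation ∫₀^x Er(n,θ;y) dy = (xⁿ/(n−1)!) ∫₀^θ t^{n−1} e^{−tx} dt. -/
/-- **Integral representation of the Erlang distribution function.**  For
`n ≥ 1`, `θ > 0` and `x ≥ 0`,
`∫₀^x Er(n,θ;y) dy = xⁿ/(n-1)! ∫₀^θ t^{n-1} e^{-tx} dt`,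
where `Er(n,θ;y) = θⁿ/(n-1)! y^{n-1} e^{-θy}`. -/
theorem erlang_cdf_integral (n : ℕ) (hn : 1 ≤ n) (θ : ℝ) (hθ : 0 < θ)
    (x : ℝ) (hx : 0 ≤ x) :
    (∫ y in (0 : ℝ)..x, θ ^ n / (n - 1).factorial * y ^ (n - 1) * Real.exp (-θ * y)) =
      x ^ n / (n - 1).factorial * ∫ t in (0 : ℝ)..θ, t ^ (n - 1) * Real.exp (-t * x) := by
  simp only [neg_mul]
  rcases eq_or_lt_of_le hx with h | hx0
  · simp [← h, zero_pow (by omega : n ≠ 0)]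
  · have hc : θ / x ≠ 0 := div_ne_zero hθ.ne' hx0.ne'
    have key := intervalIntegral.integral_comp_mul_left
      (fun t => t ^ (n - 1) * Real.exp (-(t * x))) (a := 0) (b := x) hc
    rw [mul_zero, div_mul_cancel₀ _ hx0.ne'] at key
    have h2 : ∀ y : ℝ, (θ / x * y) ^ (n - 1) * Real.exp (-(θ / x * y * x))
        = (θ / x) ^ (n - 1) * (y ^ (n - 1) * Real.exp (-(θ * y))) := by
      intro y
      rw [mul_pow]
      ring_nf
      rw [mul_inv_cancel_right₀ hx0.ne']
    simp only [h2] at key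
    rw [intervalIntegral.integral_const_mul] at key
    have ht : θ ^ n = θ ^ (n - 1) * θ := by rw [← pow_succ, Nat.sub_add_cancel hn]
    have hxp : x ^ n = x ^ (n - 1) * x := by rw [← pow_succ, Nat.sub_add_cancel hn]
    have hIy : (∫ y in (0:ℝ)..x, y ^ (n - 1) * Real.exp (-(θ * y))) * θ ^ n
        = x ^ n * ∫ t in (0:ℝ)..θ, t ^ (n - 1) * Real.exp (-(t * x)) := by
      rw [smul_eq_mul, div_pow] at key
      rw [ht, hxp]
      linear_combination (norm := skip) (x ^ (n - 1) * θ) * key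
      field_simp
      ring
    have hLHS : (∫ y in (0:ℝ)..x, θ ^ n / (n-1).factorial * y ^ (n-1) * Real.exp (-(θ * y)))
        = θ ^ n / (n-1).factorial * ∫ y in (0:ℝ)..x, y ^ (n-1) * Real.exp (-(θ * y)) := by
      rw [← intervalIntegral.integral_const_mul]; simp [mul_assoc]
    rw [hLHS]
    have hf : ((n-1).factorial : ℝ) ≠ 0 := Nat.cast_ne_zero.mpr (Nat.factorial_pos _).ne'
    field_simp
    linear_combination hIy
end

section
/- Suppose Q is concentrated on ℤ. Then for every k ∈ ℤ the function θ ↦ CPo(θ,Q;k) is differentiable on [0,∞) and d/dθ CPo(θ,Q;k) = Σ_{j∈ℤ} q_{k−j} CPo(θ,Q;j) − CPo(θ,Q;k); equivalently, d/dθ CPo(θ,Q;k) = Σ_{j∈ℤ, j≠k} q_{k−j} CPo(θ,Q;j) − (1−q₀) CPo(θ,Q;k). -/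
open MeasureTheory

/-- `n`-fold convolution power `Q^{*n}` of a measure `Q` on `ℝ`; `Q^{*0} = δ₀`. -/
noncomputable def convPow (Q : Measure ℝ) : ℕ → Measure ℝ
  | 0 => Measure.dirac 0
  | n + 1 => Measure.map (fun p : ℝ × ℝ => p.1 + p.2) ((convPow Q n).prod Q)

/-- The compound Poisson distribution
`CPo(θ,Q) = ∑_{n≥0} e^{-θ} θⁿ/n! Q^{*n}`. -/
noncomputable def CPo (θ : ℝ) (Q : Measure ℝ) : Measure ℝ :=
  Measure.sum fun n : ℕ =>
    ENNReal.ofReal (Real.exp (-θ) * θ ^ n / n.factorial) • convPow Q n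

def Zset : Set ℝ := {x : ℝ | ∃ m : ℤ, (m : ℝ) = x}

lemma Zset_eq : Zset = Set.range (fun m : ℤ => (m : ℝ)) := by
  ext x; simp [Zset, Set.range, eq_comm]

lemma Zset_countable : Zset.Countable := by
  rw [Zset_eq]; exact Set.countable_range _

lemma Zset_meas : MeasurableSet Zset := Zset_countable.measurableSet

instance convPow_prob (Q : Measure ℝ) [IsProbabilityMeasure Q] (n : ℕ) :
    IsProbabilityMeasure (convPow Q n) := by
  induction n with
  | zero => exact ⟨by simp [convPow]⟩
  | succ n ih =>
    rw [convPow]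
    exact Measure.isProbabilityMeasure_map measurable_add.aemeasurable

lemma convPow_int (Q : Measure ℝ) [IsProbabilityMeasure Q] (hQ : Q Zset = 1) (n : ℕ) :
    convPow Q n Zset = 1 := by
  induction n with
  | zero =>
    rw [convPow, Measure.dirac_apply' _ Zset_meas]
    simp [Set.indicator_of_mem, Zset, Set.mem_setOf_eq]
  | succ n ih =>
    refine le_antisymm prob_le_one ?_
    rw [convPow, Measure.map_apply measurable_add Zset_meas]
    calc (1:ENNReal) = convPow Q n Zset * Q Zset := by rw [ih, hQ, one_mul]
      _ = (convPow Q n).prod Q (Zset ×ˢ Zset) := (Measure.prod_prod _ _).symm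
      _ ≤ _ := by
          apply measure_mono
          rintro ⟨x, y⟩ ⟨⟨a, rfl⟩, ⟨b, rfl⟩⟩
          exact ⟨a + b, by push_cast; ring⟩

lemma convPow_succ_apply (Q : Measure ℝ) [IsProbabilityMeasure Q] (hQ : Q Zset = 1)
    (n : ℕ) (k : ℤ) :
    convPow Q (n + 1) {(k : ℝ)} = ∑' j : ℤ, convPow Q n {(j : ℝ)} * Q {((k - j : ℤ) : ℝ)} := by
  set μ := convPow Q n with hμ
  have hμZ : μ Zset = 1 := convPow_int Q hQ n
  have hres : μ.restrict Zset = μ := by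
    apply Measure.restrict_eq_self_of_ae_mem
    have hc : μ Zsetᶜ = 0 := by
      rw [measure_compl Zset_meas (measure_ne_top μ _), hμZ, measure_univ, tsub_self]
    exact ae_iff.mpr hc
  have hpre : ∀ x : ℝ, (Prod.mk x ⁻¹' ((fun p : ℝ × ℝ => p.1 + p.2) ⁻¹' {(k : ℝ)}))
      = {((k : ℝ) - x)} := by
    intro x; ext y
    simp [eq_sub_iff_add_eq, add_comm]
  rw [convPow, Measure.map_apply measurable_add (measurableSet_singleton _),
    Measure.prod_apply (measurable_add (measurableSet_singleton _))]
  simp only [hpre]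
  have hswap : ∫⁻ x, Q {(k : ℝ) - x} ∂(convPow Q n) = ∫⁻ x in Zset, Q {(k : ℝ) - x} ∂μ := by
    rw [hres]
  rw [hswap, lintegral_countable _ Zset_countable]
  let e : ℤ ≃ Zset :=
    (Equiv.ofInjective (fun m : ℤ => (m : ℝ)) Int.cast_injective).trans
      (Equiv.setCongr Zset_eq.symm)
  rw [← e.tsum_eq]
  apply tsum_congr
  intro j
  have hej : ((e j : Zset) : ℝ) = (j : ℝ) := rfl
  rw [hej]
  rw [mul_comm]
  congr 2
  push_cast; ring

lemma CPo_apply (θ : ℝ) (Q : Measure ℝ) (x : ℝ) :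
    CPo θ Q {x} = ∑' n : ℕ,
      ENNReal.ofReal (Real.exp (-θ) * θ ^ n / n.factorial) * convPow Q n {x} := by
  rw [CPo, Measure.sum_apply _ (measurableSet_singleton x)]
  simp [Measure.smul_apply, smul_eq_mul]

lemma coeff_summable (θ : ℝ) :
    Summable fun n : ℕ => Real.exp (-θ) * θ ^ n / n.factorial := by
  simpa [mul_div_assoc] using (Real.summable_pow_div_factorial θ).mul_left (Real.exp (-θ))

lemma sum_coeff_ne_top {θ : ℝ} (hθ : 0 ≤ θ) :
    (∑' n : ℕ, ENNReal.ofReal (Real.exp (-θ) * θ ^ n / n.factorial)) ≠ ⊤ := by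
  rw [← ENNReal.ofReal_tsum_of_nonneg (fun n => by positivity) (coeff_summable θ)]
  exact ENNReal.ofReal_ne_top

lemma CPo_ne_top (Q : Measure ℝ) [IsProbabilityMeasure Q] {θ : ℝ} (hθ : 0 ≤ θ) (x : ℝ) :
    CPo θ Q {x} ≠ ⊤ := by
  refine ne_top_of_le_ne_top (sum_coeff_ne_top hθ) ?_
  rw [CPo_apply]
  refine ENNReal.tsum_le_tsum fun n => ?_
  calc ENNReal.ofReal (Real.exp (-θ) * θ ^ n / n.factorial) * convPow Q n {x}
      ≤ ENNReal.ofReal (Real.exp (-θ) * θ ^ n / n.factorial) * 1 :=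
        mul_le_mul_right prob_le_one _
    _ = _ := mul_one _

lemma CPo_toReal (Q : Measure ℝ) [IsProbabilityMeasure Q] {θ : ℝ} (hθ : 0 ≤ θ) (x : ℝ) :
    (CPo θ Q {x}).toReal = ∑' n : ℕ,
      Real.exp (-θ) * θ ^ n / n.factorial * (convPow Q n {x}).toReal := by
  rw [CPo_apply, ENNReal.tsum_toReal_eq
    (fun n => ENNReal.mul_ne_top ENNReal.ofReal_ne_top (measure_ne_top _ _))]
  refine tsum_congr fun n => ?_
  rw [ENNReal.toReal_mul, ENNReal.toReal_ofReal (by positivity)]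

lemma keyE (Q : Measure ℝ) [IsProbabilityMeasure Q] (hQ : Q Zset = 1) (k : ℤ) (θ : ℝ) :
    (∑' j : ℤ, Q {((k - j : ℤ) : ℝ)} * CPo θ Q {(j : ℝ)}) =
    ∑' n : ℕ, ENNReal.ofReal (Real.exp (-θ) * θ ^ n / n.factorial)
      * convPow Q (n + 1) {(k : ℝ)} := by
  calc (∑' j : ℤ, Q {((k - j : ℤ) : ℝ)} * CPo θ Q {(j : ℝ)})
      = ∑' (j : ℤ) (n : ℕ), ENNReal.ofReal (Real.exp (-θ) * θ ^ n / n.factorial)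
          * (convPow Q n {(j : ℝ)} * Q {((k - j : ℤ) : ℝ)}) := by
        refine tsum_congr fun j => ?_
        rw [CPo_apply, ← ENNReal.tsum_mul_left]
        exact tsum_congr fun n => by ring
    _ = ∑' (n : ℕ) (j : ℤ), ENNReal.ofReal (Real.exp (-θ) * θ ^ n / n.factorial)
          * (convPow Q n {(j : ℝ)} * Q {((k - j : ℤ) : ℝ)}) := ENNReal.tsum_comm
    _ = _ := by
        refine tsum_congr fun n => ?_
        rw [ENNReal.tsum_mul_left, convPow_succ_apply Q hQ n k]

lemma deriv_main (Q : Measure ℝ) [IsProbabilityMeasure Q] (k : ℤ) {θ : ℝ} (hθ : 0 ≤ θ) :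
    HasDerivWithinAt (fun t : ℝ => (CPo t Q {(k : ℝ)}).toReal)
      ((∑' n : ℕ, Real.exp (-θ) * θ ^ n / n.factorial
          * (convPow Q (n + 1) {(k : ℝ)}).toReal)
        - (CPo θ Q {(k : ℝ)}).toReal) (Set.Ici (0 : ℝ)) θ := by
  set p : ℕ → ℝ := fun n => (convPow Q n {(k : ℝ)}).toReal with hp
  have hp0 : ∀ n, 0 ≤ p n := fun n => ENNReal.toReal_nonneg
  have hp1 : ∀ n, p n ≤ 1 := fun n => by
    simpa using ENNReal.toReal_mono ENNReal.one_ne_top (prob_le_one (μ := convPow Q n) (s := {(k : ℝ)}))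
  set c : ℝ := θ + 1 with hcdef
  have hc1 : 1 ≤ c := by simp [hcdef]; linarith
  set g : ℕ → ℝ → ℝ := fun n t => Real.exp (-t) * t ^ n / n.factorial * p n with hg
  set g' : ℕ → ℝ → ℝ := fun n t =>
    (-Real.exp (-t) * t ^ n + Real.exp (-t) * ((n : ℝ) * t ^ (n - 1))) / n.factorial * p n
    with hg'
  have hderiv : ∀ n t, HasDerivAt (g n) (g' n t) t := by
    intro n t
    have h1 : HasDerivAt (fun t : ℝ => Real.exp (-t)) (-Real.exp (-t)) t := by
      simpa [Function.comp_def] using (Real.hasDerivAt_exp (-t)).comp t (hasDerivAt_neg t)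
    exact ((h1.mul (hasDerivAt_pow n t)).div_const _).mul_const _
  have hu : Summable (fun n : ℕ => Real.exp 1 * ((c ^ n + n * c ^ n) / n.factorial)) := by
    apply Summable.mul_left
    have heq : (fun n : ℕ => (c ^ n + n * c ^ n) / n.factorial)
        = fun n : ℕ => c ^ n / n.factorial + n * c ^ n / n.factorial :=
      funext fun n => add_div _ _ _
    rw [heq]
    refine (Real.summable_pow_div_factorial c).add ?_
    apply (summable_nat_add_iff 1).mp
    have h3 : (fun n : ℕ => ((n + 1 : ℕ) : ℝ) * c ^ (n + 1) / ((n + 1).factorial))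
        = fun n : ℕ => c * (c ^ n / n.factorial) := by
      funext n
      rw [Nat.factorial_succ]
      push_cast
      have hfac : ((n.factorial : ℝ)) ≠ 0 := by positivity
      field_simp
      ring
    rw [h3]
    exact (Real.summable_pow_div_factorial c).mul_left c
  have hbound : ∀ (n : ℕ) (t : ℝ), t ∈ Set.Ioo (-1 : ℝ) (θ + 1) →
      ‖g' n t‖ ≤ Real.exp 1 * ((c ^ n + n * c ^ n) / n.factorial) := by
    intro n t ht
    have habs : |t| ≤ c := abs_le.mpr ⟨by simp only [hcdef]; linarith [ht.1], le_of_lt ht.2⟩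
    have hexp : Real.exp (-t) ≤ Real.exp 1 := Real.exp_le_exp.mpr (by linarith [ht.1])
    have htn : |t| ^ n ≤ c ^ n := pow_le_pow_left₀ (abs_nonneg t) habs n
    have htn1 : |t| ^ (n - 1) ≤ c ^ n :=
      le_trans (pow_le_pow_left₀ (abs_nonneg t) habs _)
        (pow_le_pow_right₀ hc1 (Nat.sub_le n 1))
    have hnum : |(-Real.exp (-t) * t ^ n + Real.exp (-t) * ((n : ℝ) * t ^ (n - 1)))|
        ≤ Real.exp 1 * c ^ n + Real.exp 1 * (n * c ^ n) := by
      refine (abs_add_le _ _).trans (add_le_add ?_ ?_)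
      · rw [abs_mul, abs_neg, abs_of_nonneg (Real.exp_pos _).le, abs_pow]
        exact mul_le_mul hexp htn (by positivity) (Real.exp_pos 1).le
      · rw [abs_mul, abs_of_nonneg (Real.exp_pos _).le, abs_mul, abs_pow,
          Nat.abs_cast]
        refine mul_le_mul hexp ?_ (by positivity) (Real.exp_pos 1).le
        exact mul_le_mul_of_nonneg_left htn1 (Nat.cast_nonneg n)
    rw [hg', Real.norm_eq_abs, abs_mul, abs_div, abs_of_nonneg (show (0:ℝ) ≤ n.factorial by positivity),
      abs_of_nonneg (hp0 n)]
    calc |(-Real.exp (-t) * t ^ n + Real.exp (-t) * ((n : ℝ) * t ^ (n - 1)))| / n.factorial * p n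
        ≤ (Real.exp 1 * c ^ n + Real.exp 1 * (n * c ^ n)) / n.factorial * 1 := by
          apply mul_le_mul (by gcongr) (hp1 n) (hp0 n) (by positivity)
      _ = Real.exp 1 * ((c ^ n + n * c ^ n) / n.factorial) := by ring
  have hg0 : Summable fun n => g n θ := by
    refine Summable.of_nonneg_of_le (fun n => ?_) (fun n => ?_)
      ((Real.summable_pow_div_factorial θ).mul_left (Real.exp (-θ)))
    · exact mul_nonneg (by positivity) (hp0 n)
    · calc g n θ ≤ Real.exp (-θ) * θ ^ n / n.factorial * 1 := by
            apply mul_le_mul_of_nonneg_left (hp1 n) (by positivity)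
        _ = Real.exp (-θ) * (θ ^ n / n.factorial) := by ring
  have hmem : θ ∈ Set.Ioo (-1 : ℝ) (θ + 1) := ⟨by linarith, by linarith⟩
  have hT : HasDerivAt (fun z => ∑' n, g n z) (∑' n, g' n θ) θ :=
    hasDerivAt_tsum_of_isPreconnected hu isOpen_Ioo isPreconnected_Ioo
      (fun n y _ => hderiv n y) hbound hmem hg0 hmem
  have hW : HasDerivWithinAt (fun z => ∑' n, g n z) (∑' n, g' n θ) (Set.Ici (0 : ℝ)) θ :=
    hT.hasDerivWithinAt
  have hEq : ∀ t ∈ Set.Ici (0 : ℝ), (CPo t Q {(k : ℝ)}).toReal = ∑' n, g n t := by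
    intro t ht
    exact CPo_toReal Q ht ((k : ℝ))
  have hW2 := hW.congr hEq (hEq θ hθ)
  -- now identify the derivative value
  set A : ℕ → ℝ := fun n => Real.exp (-θ) * ((n : ℝ) * θ ^ (n - 1)) / n.factorial * p n with hA
  have hAB : ∀ n, g' n θ = A n - g n θ := by
    intro n; simp only [hg', hA, hg]; ring
  have hAsucc : (fun n : ℕ => A (n + 1))
      = fun n : ℕ => Real.exp (-θ) * θ ^ n / n.factorial * p (n + 1) := by
    funext n
    simp only [hA, Nat.add_sub_cancel]
    rw [Nat.factorial_succ]
    push_cast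
    have hfac : ((n.factorial : ℝ)) ≠ 0 := by positivity
    field_simp
  have hAsum : Summable A := by
    apply (summable_nat_add_iff 1).mp
    rw [hAsucc]
    refine Summable.of_nonneg_of_le (fun n => mul_nonneg (by positivity) (hp0 (n+1)))
      (fun n => ?_) ((Real.summable_pow_div_factorial θ).mul_left (Real.exp (-θ)))
    calc Real.exp (-θ) * θ ^ n / n.factorial * p (n + 1)
        ≤ Real.exp (-θ) * θ ^ n / n.factorial * 1 := by
          apply mul_le_mul_of_nonneg_left (hp1 (n+1)) (by positivity)
      _ = Real.exp (-θ) * (θ ^ n / n.factorial) := by ring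
  have hsum_eq : (∑' n, g' n θ) =
      (∑' n : ℕ, Real.exp (-θ) * θ ^ n / n.factorial * p (n + 1))
        - (CPo θ Q {(k : ℝ)}).toReal := by
    rw [tsum_congr hAB, hAsum.tsum_sub hg0, hEq θ hθ]
    congr 1
    rw [hAsum.tsum_eq_zero_add]
    have hA0 : A 0 = 0 := by simp [hA]
    rw [hA0, zero_add, hAsucc]
  rwa [hsum_eq] at hW2


/-- **Derivative of the compound Poisson probabilities (lattice case).**
Suppose `Q` is concentrated on `ℤ`, and write `CPo(θ,Q;k) = CPo(θ,Q)({k})`,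
`q_j = Q({j})`.  Then for every `k ∈ ℤ` the map `θ ↦ CPo(θ,Q;k)` is
differentiable on `[0,∞)` with derivative
`∑_{j∈ℤ} q_{k-j} CPo(θ,Q;j) - CPo(θ,Q;k)`; equivalently, the derivative is
`∑_{j≠k} q_{k-j} CPo(θ,Q;j) - (1-q₀) CPo(θ,Q;k)`. -/
theorem compoundPoisson_pmf_deriv
    (Q : Measure ℝ) [IsProbabilityMeasure Q]
    (hQ : Q {x : ℝ | ∃ m : ℤ, (m : ℝ) = x} = 1) (k : ℤ) :
    ∀ θ ∈ Set.Ici (0 : ℝ),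
      HasDerivWithinAt (fun t : ℝ => (CPo t Q {(k : ℝ)}).toReal)
        ((∑' j : ℤ, (Q {((k - j : ℤ) : ℝ)}).toReal * (CPo θ Q {(j : ℝ)}).toReal) -
          (CPo θ Q {(k : ℝ)}).toReal)
        (Set.Ici (0 : ℝ)) θ ∧
      HasDerivWithinAt (fun t : ℝ => (CPo t Q {(k : ℝ)}).toReal)
        ((∑' j : ℤ, if j = k then 0 else
            (Q {((k - j : ℤ) : ℝ)}).toReal * (CPo θ Q {(j : ℝ)}).toReal) -
          (1 - (Q {(0 : ℝ)}).toReal) * (CPo θ Q {(k : ℝ)}).toReal)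
        (Set.Ici (0 : ℝ)) θ := by
  have hQZ : Q Zset = 1 := hQ
  intro θ hθ
  have hθ0 : (0 : ℝ) ≤ θ := hθ
  have hkey := keyE Q hQZ k θ
  have hS : (∑' j : ℤ, Q {((k - j : ℤ) : ℝ)} * CPo θ Q {(j : ℝ)}) ≠ ⊤ := by
    rw [hkey]
    refine ne_top_of_le_ne_top (sum_coeff_ne_top hθ0) (ENNReal.tsum_le_tsum fun n => ?_)
    calc ENNReal.ofReal (Real.exp (-θ) * θ ^ n / n.factorial) * convPow Q (n + 1) {(k : ℝ)}
        ≤ ENNReal.ofReal (Real.exp (-θ) * θ ^ n / n.factorial) * 1 :=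
          mul_le_mul_right prob_le_one _
      _ = _ := mul_one _
  have wayJ : (∑' j : ℤ, Q {((k - j : ℤ) : ℝ)} * CPo θ Q {(j : ℝ)}).toReal
      = ∑' j : ℤ, (Q {((k - j : ℤ) : ℝ)}).toReal * (CPo θ Q {(j : ℝ)}).toReal := by
    rw [ENNReal.tsum_toReal_eq
      (fun j => ENNReal.mul_ne_top (measure_ne_top _ _) (CPo_ne_top Q hθ0 _))]
    exact tsum_congr fun j => ENNReal.toReal_mul
  have wayN : (∑' j : ℤ, Q {((k - j : ℤ) : ℝ)} * CPo θ Q {(j : ℝ)}).toReal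
      = ∑' n : ℕ, Real.exp (-θ) * θ ^ n / n.factorial
          * (convPow Q (n + 1) {(k : ℝ)}).toReal := by
    rw [hkey, ENNReal.tsum_toReal_eq
      (fun n => ENNReal.mul_ne_top ENNReal.ofReal_ne_top (measure_ne_top _ _))]
    exact tsum_congr fun n => by
      rw [ENNReal.toReal_mul, ENNReal.toReal_ofReal (by positivity)]
  have E1 : (∑' n : ℕ, Real.exp (-θ) * θ ^ n / n.factorial
        * (convPow Q (n + 1) {(k : ℝ)}).toReal)
      = ∑' j : ℤ, (Q {((k - j : ℤ) : ℝ)}).toReal * (CPo θ Q {(j : ℝ)}).toReal :=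
    wayN.symm.trans wayJ
  have hd := deriv_main Q k hθ0
  rw [E1] at hd
  refine ⟨hd, ?_⟩
  have hfs : Summable (fun j : ℤ =>
      (Q {((k - j : ℤ) : ℝ)}).toReal * (CPo θ Q {(j : ℝ)}).toReal) := by
    have := ENNReal.summable_toReal hS
    simpa [ENNReal.toReal_mul] using this
  have hsplit := hfs.tsum_eq_add_tsum_ite k
  have hk0 : (Q {((k - k : ℤ) : ℝ)}).toReal = (Q {(0 : ℝ)}).toReal := by norm_num
  have : (∑' j : ℤ, if j = k then 0 else
        (Q {((k - j : ℤ) : ℝ)}).toReal * (CPo θ Q {(j : ℝ)}).toReal) -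
      (1 - (Q {(0 : ℝ)}).toReal) * (CPo θ Q {(k : ℝ)}).toReal
      = (∑' j : ℤ, (Q {((k - j : ℤ) : ℝ)}).toReal * (CPo θ Q {(j : ℝ)}).toReal) -
        (CPo θ Q {(k : ℝ)}).toReal := by
    rw [hsplit, hk0]; ring
  rwa [this]
end

section
/- Suppose Q is concentrated on ℤ. Then for every k ∈ ℤ and every θ ≥ 0, e^{(1−q₀)θ} CPo(θ,Q;k) = 1{k=0} + Σ_{j∈ℤ, j≠k} q_{k−j} ∫₀^θ e^{(1−q₀)t} CPo(t,Q;j) dt; in particular, for k ≠ 0, CPo(θ,Q;k) = e^{−(1−q₀)θ} Σ_{j≠k} q_{k−j} ∫₀^θ e^{(1−q₀)t} CPo(t,Q;j) dt. -/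
open MeasureTheory

open scoped ENNReal

namespace CPRec

def Zs : Set ℝ := Set.range (fun m : ℤ => (m : ℝ))

lemma Zs_meas : MeasurableSet Zs := (Set.countable_range _).measurableSet

lemma Zs_eq : {x : ℝ | ∃ m : ℤ, (m : ℝ) = x} = Zs := rfl

lemma mem_Zs (j : ℤ) : ((j : ℝ)) ∈ Zs := ⟨j, rfl⟩

lemma cast_inj : Function.Injective (fun m : ℤ => (m : ℝ)) := fun a b h =>
  Int.cast_injective h

lemma iUnion_singleton : (⋃ j : ℤ, {((j : ℝ))}) = Zs := by
  ext x; simp [Zs, eq_comm]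

instance convPow_prob (Q : Measure ℝ) [IsProbabilityMeasure Q] (n : ℕ) :
    IsProbabilityMeasure (convPow Q n) := by
  induction n with
  | zero => exact MeasureTheory.Measure.dirac.isProbabilityMeasure
  | succ n ih =>
    exact Measure.isProbabilityMeasure_map (measurable_fst.add measurable_snd).aemeasurable

lemma convPow_conc (Q : Measure ℝ) [IsProbabilityMeasure Q] (hQ : Q Zs = 1) (n : ℕ) :
    convPow Q n Zs = 1 := by
  induction n with
  | zero => rw [convPow, Measure.dirac_apply' _ Zs_meas, Set.indicator_of_mem (show (0:ℝ) ∈ Zs from ⟨0, by norm_num⟩)]; rfl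
  | succ n ih =>
    have hmeas : Measurable (fun p : ℝ × ℝ => p.1 + p.2) := measurable_fst.add measurable_snd
    have h1 : convPow Q (n+1) Zs ≤ 1 := prob_le_one
    have h2 : (1 : ℝ≥0∞) ≤ convPow Q (n+1) Zs := by
      rw [convPow, Measure.map_apply hmeas Zs_meas]
      have hsub : Zs ×ˢ Zs ⊆ (fun p : ℝ × ℝ => p.1 + p.2) ⁻¹' Zs := by
        rintro ⟨x, y⟩ ⟨⟨a, rfl⟩, ⟨b, rfl⟩⟩
        exact ⟨a + b, by push_cast; ring⟩
      calc (1 : ℝ≥0∞) = ((convPow Q n).prod Q) (Zs ×ˢ Zs) := by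
            rw [Measure.prod_prod, ih, hQ, one_mul]
        _ ≤ _ := measure_mono hsub
    exact le_antisymm h1 h2

lemma conc_compl (μ : Measure ℝ) [IsProbabilityMeasure μ] (hμ : μ Zs = 1) : μ Zsᶜ = 0 := by
  rw [measure_compl Zs_meas (measure_ne_top _ _), hμ, measure_univ, tsub_self]

/-- key convolution identity -/
lemma conv_singleton (μ ν : Measure ℝ) [IsProbabilityMeasure μ] [IsProbabilityMeasure ν]
    (hμ : μ Zs = 1) (hν : ν Zs = 1) (k : ℤ) :
    Measure.map (fun p : ℝ × ℝ => p.1 + p.2) (μ.prod ν) {((k : ℝ))} =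
      ∑' j : ℤ, μ {((j : ℝ))} * ν {(((k - j : ℤ) : ℝ))} := by
  have hmeas : Measurable (fun p : ℝ × ℝ => p.1 + p.2) := measurable_fst.add measurable_snd
  rw [Measure.map_apply hmeas (measurableSet_singleton _)]
  have hE : ∀ p : ℝ × ℝ, p ∈ (fun p : ℝ × ℝ => p.1 + p.2) ⁻¹' {((k : ℝ))} ↔ p.1 + p.2 = (k : ℝ) :=
    fun p => Iff.rfl
  set E : Set (ℝ × ℝ) := (fun p : ℝ × ℝ => p.1 + p.2) ⁻¹' {((k : ℝ))} with hEdef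
  set T : Set (ℝ × ℝ) := Zs ×ˢ Zs with hT
  have hTmeas : MeasurableSet T := Zs_meas.prod Zs_meas
  have hTc : (μ.prod ν) Tᶜ = 0 := by
    have : (μ.prod ν) T = 1 := by rw [hT, Measure.prod_prod, hμ, hν, one_mul]
    rw [measure_compl hTmeas (measure_ne_top _ _), this, measure_univ, tsub_self]
  have hsplit : (μ.prod ν) E = (μ.prod ν) (E ∩ T) := by
    have h1 : (μ.prod ν) (E ∩ T) + (μ.prod ν) (E \ T) = (μ.prod ν) E :=
      measure_inter_add_diff E hTmeas
    have h2 : (μ.prod ν) (E \ T) = 0 :=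
      measure_mono_null (fun p hp => hp.2) hTc
    rw [← h1, h2, add_zero]
  have hET : E ∩ T = ⋃ j : ℤ, {(((j : ℝ)), ((k - j : ℤ) : ℝ))} := by
    ext ⟨x, y⟩
    constructor
    · rintro ⟨hxy, ⟨a, rfl⟩, ⟨b, rfl⟩⟩
      rw [hE] at hxy
      simp only at hxy
      have hab : a + b = k := by exact_mod_cast hxy
      refine Set.mem_iUnion.2 ⟨a, ?_⟩
      have hb : b = k - a := by omega
      simp [hb]
    · intro hp
      obtain ⟨j, hj⟩ := Set.mem_iUnion.1 hp
      simp only [Set.mem_singleton_iff, Prod.mk.injEq] at hj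
      obtain ⟨hx, hy⟩ := hj
      subst hx; subst hy
      refine ⟨(hE _).2 ?_, mem_Zs j, mem_Zs (k - j)⟩
      push_cast; ring
  have hdisj : Pairwise (Function.onFun Disjoint
      (fun j : ℤ => ({(((j : ℝ)), ((k - j : ℤ) : ℝ))} : Set (ℝ × ℝ)))) := by
    intro i j hij
    simp only [Function.onFun, Set.disjoint_singleton]
    intro h
    exact hij (cast_inj (congrArg Prod.fst h))
  rw [hsplit, hET, measure_iUnion hdisj (fun j => measurableSet_singleton _)]
  congr 1
  ext j
  have : ({(((j : ℝ)), ((k - j : ℤ) : ℝ))} : Set (ℝ × ℝ)) =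
      {((j : ℝ))} ×ˢ {(((k - j : ℤ) : ℝ))} := by
    rw [Set.singleton_prod_singleton]
  rw [this, Measure.prod_prod]

lemma tsum_singleton (μ : Measure ℝ) [IsProbabilityMeasure μ] (hμ : μ Zs = 1) :
    ∑' j : ℤ, μ {((j : ℝ))} = 1 := by
  rw [← hμ, ← iUnion_singleton, measure_iUnion ?_ (fun j => measurableSet_singleton _)]
  intro i j hij
  simp only [Function.onFun, Set.disjoint_singleton]
  exact fun h => hij (cast_inj h)

end CPRec

namespace CPRec

noncomputable def aa (Q : Measure ℝ) (n : ℕ) (j : ℤ) : ℝ := (convPow Q n {((j : ℝ))}).toReal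
noncomputable def qq (Q : Measure ℝ) (i : ℤ) : ℝ := (Q {((i : ℝ))}).toReal

variable {Q : Measure ℝ} [IsProbabilityMeasure Q]

lemma aa_nonneg (n : ℕ) (j : ℤ) : 0 ≤ aa Q n j := ENNReal.toReal_nonneg
lemma qq_nonneg (i : ℤ) : 0 ≤ qq Q i := ENNReal.toReal_nonneg

lemma aa_le_one (n : ℕ) (j : ℤ) : aa Q n j ≤ 1 := by
  have := ENNReal.toReal_mono (by norm_num) (prob_le_one (μ := convPow Q n) (s := {((j : ℝ))}))
  simpa [aa] using this

lemma qq_le_one (i : ℤ) : qq Q i ≤ 1 := by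
  have := ENNReal.toReal_mono (by norm_num) (prob_le_one (μ := Q) (s := {((i : ℝ))}))
  simpa [qq] using this

lemma summable_qq (hQ : Q Zs = 1) : Summable (qq Q) := by
  apply ENNReal.summable_toReal
  rw [tsum_singleton Q hQ]
  exact ENNReal.one_ne_top

lemma summable_qq_shift (hQ : Q Zs = 1) (k : ℤ) : Summable (fun j : ℤ => qq Q (k - j)) :=
  (summable_qq hQ).comp_injective (sub_right_injective)

/-- real-valued convolution identity -/
lemma aa_succ (hQ : Q Zs = 1) (n : ℕ) (k : ℤ) :
    aa Q (n + 1) k = ∑' j : ℤ, qq Q (k - j) * aa Q n j := by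
  have h := conv_singleton (convPow Q n) Q (convPow_conc Q hQ n) hQ k
  unfold aa qq
  rw [show convPow Q (n+1) = Measure.map (fun p : ℝ × ℝ => p.1 + p.2)
    ((convPow Q n).prod Q) from rfl, h, ENNReal.tsum_toReal_eq
      (fun j => ENNReal.mul_ne_top (measure_ne_top _ _) (measure_ne_top _ _))]
  congr 1; ext j
  rw [ENNReal.toReal_mul, mul_comm]

lemma summable_qa (hQ : Q Zs = 1) (n : ℕ) (k : ℤ) :
    Summable (fun j : ℤ => qq Q (k - j) * aa Q n j) := by
  refine Summable.of_nonneg_of_le (fun j => mul_nonneg (qq_nonneg _) (aa_nonneg _ _))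
    (fun j => ?_) (summable_qq_shift hQ k)
  calc qq Q (k - j) * aa Q n j ≤ qq Q (k - j) * 1 :=
        mul_le_mul_of_nonneg_left (aa_le_one _ _) (qq_nonneg _)
    _ = qq Q (k - j) := mul_one _

/-- `CPo` singleton as a real series -/
lemma CPo_singleton {t : ℝ} (ht : 0 ≤ t) (k : ℤ) :
    (CPo t Q {((k : ℝ))}).toReal =
      ∑' n : ℕ, Real.exp (-t) * t ^ n / n.factorial * aa Q n k := by
  rw [CPo, Measure.sum_apply _ (measurableSet_singleton _)]
  simp only [Measure.smul_apply, smul_eq_mul]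
  rw [ENNReal.tsum_toReal_eq
    (fun n => ENNReal.mul_ne_top ENNReal.ofReal_ne_top (measure_ne_top _ _))]
  congr 1; ext n
  rw [ENNReal.toReal_mul, ENNReal.toReal_ofReal (by positivity)]
  rfl

noncomputable def bb (Q : Measure ℝ) (N : ℕ) (j : ℤ) : ℝ :=
  ∑ n ∈ Finset.range (N + 1), (N.choose n : ℝ) * (-(qq Q 0)) ^ (N - n) * aa Q n j

lemma abs_bb_le (N : ℕ) (j : ℤ) : |bb Q N j| ≤ 2 ^ N := by
  calc |bb Q N j| ≤ ∑ n ∈ Finset.range (N + 1),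
        |(N.choose n : ℝ) * (-(qq Q 0)) ^ (N - n) * aa Q n j| :=
        Finset.abs_sum_le_sum_abs _ _
    _ ≤ ∑ n ∈ Finset.range (N + 1), (N.choose n : ℝ) := by
        refine Finset.sum_le_sum fun n _ => ?_
        rw [abs_mul, abs_mul]
        have h1 : |(N.choose n : ℝ)| = (N.choose n : ℝ) := abs_of_nonneg (by positivity)
        have h2 : |(-(qq Q 0)) ^ (N - n)| ≤ 1 := by
          rw [abs_pow, abs_neg, abs_of_nonneg (qq_nonneg 0)]
          exact pow_le_one₀ (qq_nonneg 0) (qq_le_one 0)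
        have h3 : |aa Q n j| ≤ 1 := by
          rw [abs_of_nonneg (aa_nonneg n j)]; exact aa_le_one n j
        calc |(N.choose n : ℝ)| * |(-(qq Q 0)) ^ (N - n)| * |aa Q n j|
            ≤ (N.choose n : ℝ) * 1 * 1 := by
              rw [h1]
              exact mul_le_mul (mul_le_mul_of_nonneg_left h2 (by positivity)) h3
                (abs_nonneg _) (by positivity)
          _ = (N.choose n : ℝ) := by ring
    _ = 2 ^ N := by exact_mod_cast Nat.sum_range_choose N

lemma summable_qb (hQ : Q Zs = 1) (N : ℕ) (k : ℤ) :
    Summable (fun j : ℤ => if j = k then 0 else qq Q (k - j) * bb Q N j) := by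
  refine Summable.of_norm ?_
  refine Summable.of_nonneg_of_le (fun j => norm_nonneg _) (fun j => ?_)
    ((summable_qq_shift hQ k).mul_right (2 ^ N))
  by_cases h : j = k
  · simp only [h, if_true, norm_zero]
    exact mul_nonneg (qq_nonneg _) (by positivity)
  · simp only [h, if_false, norm_mul, Real.norm_eq_abs]
    rw [abs_of_nonneg (qq_nonneg _)]
    exact mul_le_mul_of_nonneg_left ((abs_bb_le N j)) (qq_nonneg _)

lemma bb_rec (hQ : Q Zs = 1) (N : ℕ) (k : ℤ) :
    bb Q (N + 1) k = ∑' j : ℤ, if j = k then 0 else qq Q (k - j) * bb Q N j := by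
  set x : ℝ := -(qq Q 0) with hx
  have hA : ∑ n ∈ Finset.range (N + 1),
      (N.choose n : ℝ) * x ^ (N + 1 - n) * aa Q n k = x * bb Q N k := by
    rw [bb, Finset.mul_sum]
    refine Finset.sum_congr rfl fun n hn => ?_
    have hn' : n ≤ N := Nat.lt_succ_iff.1 (Finset.mem_range.1 hn)
    have h1 : N + 1 - n = (N - n) + 1 := by omega
    rw [h1, pow_succ]; ring
  have key : bb Q (N + 1) k =
      (∑ n ∈ Finset.range (N + 1), (N.choose n : ℝ) * x ^ (N + 1 - n) * aa Q n k) +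
      (∑ n ∈ Finset.range (N + 1), (N.choose n : ℝ) * x ^ (N - n) * aa Q (n + 1) k) := by
    rw [bb, Finset.sum_range_succ' (fun n => ((N+1).choose n : ℝ) * x ^ (N + 1 - n) * aa Q n k) (N+1)]
    have hsplit : ∀ n ∈ Finset.range (N + 1),
        (((N+1).choose (n+1) : ℝ)) * x ^ (N + 1 - (n+1)) * aa Q (n+1) k =
        ((N.choose (n+1) : ℝ)) * x ^ (N - n) * aa Q (n+1) k +
        ((N.choose n : ℝ)) * x ^ (N - n) * aa Q (n+1) k := by
      intro n hn
      have : (N+1).choose (n+1) = N.choose n + N.choose (n+1) := Nat.choose_succ_succ N n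
      rw [show N + 1 - (n+1) = N - n from Nat.succ_sub_succ N n, this]
      push_cast; ring
    rw [Finset.sum_congr rfl hsplit, Finset.sum_add_distrib]
    have hA' : ∑ n ∈ Finset.range (N + 1), (N.choose n : ℝ) * x ^ (N + 1 - n) * aa Q n k =
        (∑ n ∈ Finset.range N, (N.choose (n+1) : ℝ) * x ^ (N - n) * aa Q (n+1) k) +
        x ^ (N + 1) * aa Q 0 k := by
      rw [Finset.sum_range_succ' (fun n => (N.choose n : ℝ) * x ^ (N + 1 - n) * aa Q n k) N]
      simp only [Nat.succ_sub_succ, Nat.choose_zero_right, Nat.cast_one, one_mul, Nat.sub_zero]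
    have hext : ∑ n ∈ Finset.range (N + 1), (N.choose (n+1) : ℝ) * x ^ (N - n) * aa Q (n+1) k =
        ∑ n ∈ Finset.range N, (N.choose (n+1) : ℝ) * x ^ (N - n) * aa Q (n+1) k := by
      rw [Finset.sum_range_succ]
      simp [Nat.choose_succ_self]
    rw [hA', hext]
    have hf0 : ((N+1).choose 0 : ℝ) * x ^ (N + 1 - 0) * aa Q 0 k = x ^ (N+1) * aa Q 0 k := by
      norm_num
    rw [hf0]; ring
  have hB : ∑ n ∈ Finset.range (N + 1), (N.choose n : ℝ) * x ^ (N - n) * aa Q (n + 1) k =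
      qq Q 0 * bb Q N k +
      ∑' j : ℤ, (if j = k then 0 else qq Q (k - j) * bb Q N j) := by
    have hsum : ∀ n, aa Q (n+1) k =
        qq Q 0 * aa Q n k + ∑' j : ℤ, (if j = k then 0 else qq Q (k - j) * aa Q n j) := by
      intro n
      rw [aa_succ hQ]
      rw [Summable.tsum_eq_add_tsum_ite (summable_qa hQ n k) k]
      simp
    calc ∑ n ∈ Finset.range (N + 1), (N.choose n : ℝ) * x ^ (N - n) * aa Q (n + 1) k
        = ∑ n ∈ Finset.range (N + 1), ((N.choose n : ℝ) * x ^ (N - n) * (qq Q 0 * aa Q n k) +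
            (N.choose n : ℝ) * x ^ (N - n) *
              ∑' j : ℤ, (if j = k then 0 else qq Q (k - j) * aa Q n j)) := by
          refine Finset.sum_congr rfl fun n _ => ?_
          rw [hsum n]; ring
      _ = qq Q 0 * bb Q N k +
          ∑ n ∈ Finset.range (N + 1), (N.choose n : ℝ) * x ^ (N - n) *
              ∑' j : ℤ, (if j = k then 0 else qq Q (k - j) * aa Q n j) := by
          rw [Finset.sum_add_distrib, bb, Finset.mul_sum]
          congr 1
          refine Finset.sum_congr rfl fun n _ => ?_
          ring
      _ = qq Q 0 * bb Q N k +
          ∑' j : ℤ, (if j = k then 0 else qq Q (k - j) * bb Q N j) := by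
          congr 1
          have hswap : ∀ n ∈ Finset.range (N+1), Summable (fun j : ℤ =>
              (N.choose n : ℝ) * x ^ (N - n) * (if j = k then 0 else qq Q (k - j) * aa Q n j)) := by
            intro n _
            apply Summable.mul_left
            refine Summable.of_nonneg_of_le (fun j => ?_) (fun j => ?_) (summable_qa hQ n k)
            · by_cases h : j = k <;> simp [h]
              exact mul_nonneg (qq_nonneg _) (aa_nonneg _ _)
            · by_cases h : j = k <;> simp [h]
              exact mul_nonneg (qq_nonneg _) (aa_nonneg _ _)
          calc ∑ n ∈ Finset.range (N + 1), (N.choose n : ℝ) * x ^ (N - n) *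
                ∑' j : ℤ, (if j = k then 0 else qq Q (k - j) * aa Q n j)
              = ∑ n ∈ Finset.range (N + 1), ∑' j : ℤ, (N.choose n : ℝ) * x ^ (N - n) *
                  (if j = k then 0 else qq Q (k - j) * aa Q n j) := by
                refine Finset.sum_congr rfl fun n _ => ?_
                rw [tsum_mul_left]
            _ = ∑' j : ℤ, ∑ n ∈ Finset.range (N + 1), (N.choose n : ℝ) * x ^ (N - n) *
                  (if j = k then 0 else qq Q (k - j) * aa Q n j) := by
                rw [Summable.tsum_finsetSum hswap]
            _ = ∑' j : ℤ, (if j = k then 0 else qq Q (k - j) * bb Q N j) := by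
                congr 1; ext j
                by_cases h : j = k
                · simp [h]
                · simp only [h, if_false]
                  rw [bb, Finset.mul_sum]
                  refine Finset.sum_congr rfl fun n _ => ?_
                  ring
  rw [key, hA, hB, hx]; ring


lemma summable_g {t : ℝ} (ht : 0 ≤ t) (k : ℤ) :
    Summable (fun n : ℕ => ‖aa Q n k * t ^ n / n.factorial‖) := by
  refine Summable.of_nonneg_of_le (fun n => norm_nonneg _) (fun n => ?_)
    (Real.summable_pow_div_factorial t)
  rw [Real.norm_eq_abs, abs_div, abs_mul, abs_of_nonneg (aa_nonneg n k),
    abs_of_nonneg (pow_nonneg ht n), abs_of_nonneg (by positivity : (0:ℝ) ≤ (n.factorial : ℝ))]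
  apply div_le_div_of_nonneg_right ?_ (by positivity)
  exact mul_le_of_le_one_left (pow_nonneg ht n) (aa_le_one n k)

lemma g_series {t : ℝ} (ht : 0 ≤ t) (k : ℤ) :
    Real.exp ((1 - qq Q 0) * t) * (CPo t Q {((k : ℝ))}).toReal = ∑' N : ℕ, bb Q N k * t ^ N / N.factorial := by
  rw [CPo_singleton ht k, ← tsum_mul_left]
  have hexp : Real.exp ((1 - qq Q 0) * t) * Real.exp (-t) = Real.exp (-(qq Q 0 * t)) := by
    rw [← Real.exp_add]; ring_nf
  have hterm : ∀ n : ℕ, Real.exp ((1 - qq Q 0) * t) *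
      (Real.exp (-t) * t ^ n / n.factorial * aa Q n k) =
      Real.exp (-(qq Q 0 * t)) * (aa Q n k * t ^ n / n.factorial) := by
    intro n
    rw [← hexp]; ring
  rw [tsum_congr hterm, tsum_mul_left]
  have hexp2 : Real.exp (-(qq Q 0 * t)) = ∑' m : ℕ, (-(qq Q 0 * t)) ^ m / m.factorial := by
    rw [Real.exp_eq_exp_ℝ, NormedSpace.exp_eq_tsum_div]
  rw [hexp2]
  have hf : Summable (fun m : ℕ => ‖(-(qq Q 0 * t)) ^ m / (m.factorial : ℝ)‖) := by
    refine Summable.of_nonneg_of_le (fun n => norm_nonneg _) (fun m => ?_)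
      (Real.summable_pow_div_factorial (qq Q 0 * t))
    rw [Real.norm_eq_abs, abs_div, abs_pow, abs_neg,
      abs_of_nonneg (by positivity : (0:ℝ) ≤ (m.factorial : ℝ))]
    apply div_le_div_of_nonneg_right ?_ (by positivity)
    rw [abs_of_nonneg (mul_nonneg (qq_nonneg 0) ht)]
  rw [tsum_mul_tsum_eq_tsum_sum_range_of_summable_norm hf (summable_g ht k)]
  congr 1; ext N
  rw [← Finset.sum_range_reflect]
  rw [bb, Finset.sum_mul, Finset.sum_div]
  refine Finset.sum_congr rfl fun j hj => ?_
  have hjN : j ≤ N := Nat.lt_succ_iff.1 (Finset.mem_range.1 hj)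
  have h1 : N + 1 - 1 - j = N - j := by omega
  rw [h1, show N - (N - j) = j by omega]
  have hcast : (N.choose j : ℝ) = (N.factorial : ℝ) / (j.factorial * (N - j).factorial) :=
    Nat.cast_choose ℝ hjN
  have hpow : (-(qq Q 0 * t)) ^ (N - j) = (-(qq Q 0)) ^ (N - j) * t ^ (N - j) := by
    rw [← neg_mul, mul_pow]
  have htN : t ^ (N - j) * t ^ j = t ^ N := by
    rw [← pow_add]
    congr 1; omega
  rw [hpow, hcast]
  field_simp
  ring_nf
  rw [mul_assoc (qq Q 0 ^ (N - j)) (t ^ (N-j)) (t^j)] at *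
  rw [htN]


lemma summable_bbpow {t : ℝ} (ht : 0 ≤ t) (j : ℤ) :
    Summable (fun N : ℕ => bb Q N j * t ^ N / N.factorial) := by
  refine Summable.of_norm (Summable.of_nonneg_of_le (fun n => norm_nonneg _) (fun N => ?_)
    (Real.summable_pow_div_factorial (2 * t)))
  rw [Real.norm_eq_abs, abs_div, abs_mul,
    abs_of_nonneg (by positivity : (0:ℝ) ≤ (N.factorial : ℝ)), abs_of_nonneg (pow_nonneg ht N),
    mul_pow]
  apply div_le_div_of_nonneg_right ?_ (by positivity)
  exact mul_le_mul_of_nonneg_right (by simpa using abs_bb_le N j) (pow_nonneg ht N)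

lemma g_int {θ : ℝ} (hθ : 0 ≤ θ) (j : ℤ) :
    ∫ t in (0:ℝ)..θ, Real.exp ((1 - qq Q 0) * t) * (CPo t Q {((j : ℝ))}).toReal =
      ∑' N : ℕ, bb Q N j * θ ^ (N + 1) / (N + 1).factorial := by
  have hcongr : ∫ t in (0:ℝ)..θ, Real.exp ((1 - qq Q 0) * t) * (CPo t Q {((j : ℝ))}).toReal =
      ∫ t in (0:ℝ)..θ, ∑' N : ℕ, bb Q N j * t ^ N / N.factorial := by
    refine intervalIntegral.integral_congr fun t ht => ?_
    have ht0 : 0 ≤ t := by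
      rcases Set.mem_uIcc.1 ht with h | h
      · exact h.1
      · linarith [h.1, h.2]
    exact g_series ht0 j
  rw [hcongr, intervalIntegral.integral_of_le hθ]
  have hmeas : ∀ N : ℕ, AEStronglyMeasurable (fun t : ℝ => bb Q N j * t ^ N / (N.factorial : ℝ))
      (volume.restrict (Set.Ioc 0 θ)) := by
    intro N
    exact ((continuous_const.mul (continuous_pow N)).div_const _).aestronglyMeasurable
  have hbound : ∑' N : ℕ, ∫⁻ t in Set.Ioc (0:ℝ) θ, ‖bb Q N j * t ^ N / (N.factorial : ℝ)‖₊ ≠ ⊤ := by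
    have hle : ∀ N : ℕ, (∫⁻ t in Set.Ioc (0:ℝ) θ, ‖bb Q N j * t ^ N / (N.factorial : ℝ)‖₊) ≤
        ENNReal.ofReal ((2 * θ) ^ N / N.factorial * θ) := by
      intro N
      have hb : ∀ t ∈ Set.Ioc (0:ℝ) θ,
          (‖bb Q N j * t ^ N / (N.factorial : ℝ)‖₊ : ℝ≥0∞) ≤
            ENNReal.ofReal ((2 * θ) ^ N / N.factorial) := by
        intro t htt
        rw [show ((‖bb Q N j * t ^ N / (N.factorial : ℝ)‖₊ : ℝ≥0∞)) = ENNReal.ofReal ‖bb Q N j * t ^ N / (N.factorial : ℝ)‖ from (ofReal_norm _).symm]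
        apply ENNReal.ofReal_le_ofReal
        rw [Real.norm_eq_abs, abs_div, abs_mul,
          abs_of_nonneg (by positivity : (0:ℝ) ≤ (N.factorial : ℝ)),
          abs_of_nonneg (pow_nonneg (le_of_lt htt.1) N), mul_pow]
        apply div_le_div_of_nonneg_right ?_ (by positivity)
        have h1 : |bb Q N j| ≤ 2 ^ N := abs_bb_le N j
        have h2 : t ^ N ≤ θ ^ N := pow_le_pow_left₀ (le_of_lt htt.1) htt.2 N
        calc |bb Q N j| * t ^ N ≤ 2 ^ N * θ ^ N := by
              exact mul_le_mul h1 h2 (pow_nonneg (le_of_lt htt.1) N) (by positivity)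
          _ = 2 ^ N * θ ^ N := rfl
      calc (∫⁻ t in Set.Ioc (0:ℝ) θ, ‖bb Q N j * t ^ N / (N.factorial : ℝ)‖₊) ≤
            ∫⁻ _ in Set.Ioc (0:ℝ) θ, ENNReal.ofReal ((2 * θ) ^ N / N.factorial) :=
            setLIntegral_mono measurable_const hb
        _ = ENNReal.ofReal ((2 * θ) ^ N / N.factorial) * volume (Set.Ioc (0:ℝ) θ) := by
            rw [setLIntegral_const]
        _ = ENNReal.ofReal ((2 * θ) ^ N / N.factorial) * ENNReal.ofReal θ := by
            rw [Real.volume_Ioc, sub_zero]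
        _ = ENNReal.ofReal ((2 * θ) ^ N / N.factorial * θ) := by
            rw [← ENNReal.ofReal_mul (by positivity)]
    have hsum : Summable (fun N : ℕ => (2 * θ) ^ N / N.factorial * θ) :=
      (Real.summable_pow_div_factorial (2 * θ)).mul_right θ
    have : ∑' N : ℕ, ENNReal.ofReal ((2 * θ) ^ N / N.factorial * θ) ≠ ⊤ := by
      rw [← ENNReal.ofReal_tsum_of_nonneg (fun N => by positivity) hsum]
      exact ENNReal.ofReal_ne_top
    exact ne_top_of_le_ne_top this (ENNReal.tsum_le_tsum hle)
  rw [MeasureTheory.integral_tsum hmeas hbound]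
  congr 1; ext N
  have : ∫ t in Set.Ioc (0:ℝ) θ, bb Q N j * t ^ N / (N.factorial : ℝ) =
      ∫ t in (0:ℝ)..θ, bb Q N j / (N.factorial : ℝ) * t ^ N := by
    rw [intervalIntegral.integral_of_le hθ]
    congr 1; ext t; ring
  rw [this, intervalIntegral.integral_const_mul, integral_pow, Nat.factorial_succ,
    zero_pow (Nat.succ_ne_zero N), sub_zero]
  push_cast
  have hfac : (N.factorial : ℝ) ≠ 0 := by positivity
  have hN1 : ((N : ℝ) + 1) ≠ 0 := by positivity
  field_simp

lemma aa_zero (k : ℤ) : aa Q 0 k = if k = 0 then 1 else 0 := by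
  unfold aa
  rw [show convPow Q 0 = Measure.dirac 0 from rfl,
    Measure.dirac_apply' _ (measurableSet_singleton _)]
  by_cases h : k = 0
  · subst h; simp
  · rw [Set.indicator_of_notMem, ENNReal.toReal_zero, if_neg h]
    simp only [Set.mem_singleton_iff]
    exact fun hc => h (by exact_mod_cast hc.symm)

set_option maxHeartbeats 1000000 in
lemma main_calc (hQ : Q Zs = 1) (k : ℤ) {θ : ℝ} (hθ : 0 ≤ θ) :
    Real.exp ((1 - qq Q 0) * θ) * (CPo θ Q {((k : ℝ))}).toReal =
      (if k = 0 then 1 else 0) +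
        ∑' j : ℤ, (if j = k then 0 else qq Q (k - j) *
          ∫ t in (0:ℝ)..θ, Real.exp ((1 - qq Q 0) * t) * (CPo t Q {((j : ℝ))}).toReal) := by
  set F : ℤ → ℕ → ℝ := fun j N =>
    if j = k then 0 else qq Q (k - j) * (bb Q N j * θ ^ (N+1) / (N+1).factorial) with hF
  have hFsum : Summable (Function.uncurry F) := by
    apply Summable.of_norm
    have hg : Summable (fun N : ℕ => θ * ((2*θ)^N / N.factorial)) :=
      (Real.summable_pow_div_factorial (2*θ)).mul_left θ
    have hprod : Summable (fun p : ℤ × ℕ =>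
        qq Q (k - p.1) * (θ * ((2*θ)^p.2 / p.2.factorial))) :=
      Summable.mul_of_nonneg (summable_qq_shift hQ k) hg (fun j => qq_nonneg _)
        (fun N => by positivity)
    refine Summable.of_nonneg_of_le (fun p => norm_nonneg _) (fun p => ?_) hprod
    obtain ⟨j, N⟩ := p
    by_cases h : j = k
    · simp only [Function.uncurry, hF, h, if_true, norm_zero]
      exact mul_nonneg (qq_nonneg _) (by positivity)
    · simp only [Function.uncurry, hF, h, if_false, norm_mul, Real.norm_eq_abs,
        abs_of_nonneg (qq_nonneg (k - j))]
      apply mul_le_mul_of_nonneg_left ?_ (qq_nonneg _)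
      have h1 : |bb Q N j * θ ^ (N+1) / ((N+1).factorial : ℝ)| ≤
          2 ^ N * θ ^ (N+1) / ((N+1).factorial : ℝ) := by
        rw [abs_div, abs_mul, abs_of_nonneg (by positivity : (0:ℝ) ≤ ((N+1).factorial : ℝ)),
          abs_of_nonneg (pow_nonneg hθ (N+1))]
        apply div_le_div_of_nonneg_right ?_ (by positivity)
        exact mul_le_mul_of_nonneg_right (abs_bb_le N j) (pow_nonneg hθ (N+1))
      refine h1.trans ?_
      have h2 : (2:ℝ) ^ N * θ ^ (N+1) / ((N+1).factorial : ℝ) ≤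
          2 ^ N * θ ^ (N+1) / (N.factorial : ℝ) := by
        apply div_le_div_of_nonneg_left (by positivity) (by positivity)
        exact_mod_cast Nat.factorial_le (Nat.le_succ N)
      refine h2.trans ?_
      apply le_of_eq
      rw [mul_pow, pow_succ]
      ring
  have hLHS : Real.exp ((1 - qq Q 0) * θ) * (CPo θ Q {((k : ℝ))}).toReal =
      (if k = 0 then 1 else 0) + ∑' N : ℕ, bb Q (N+1) k * θ ^ (N+1) / (N+1).factorial := by
    rw [g_series hθ k, Summable.tsum_eq_zero_add (summable_bbpow hθ k)]
    congr 1
    simp only [pow_zero, Nat.factorial_zero, Nat.cast_one, mul_one, div_one]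
    rw [show bb Q 0 k = aa Q 0 k by simp [bb], aa_zero]
  rw [hLHS]
  congr 1
  have hstep1 : ∀ j : ℤ, (if j = k then 0 else qq Q (k - j) *
      ∫ t in (0:ℝ)..θ, Real.exp ((1 - qq Q 0) * t) * (CPo t Q {((j : ℝ))}).toReal) = ∑' N : ℕ, F j N := by
    intro j
    by_cases h : j = k
    · simp [hF, h]
    · simp only [h, if_false, hF]
      rw [g_int hθ j, ← tsum_mul_left]
  rw [tsum_congr hstep1, ← Summable.tsum_comm hFsum]
  congr 1; ext N
  have hstep2 : ∀ j : ℤ, F j N =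
      θ ^ (N+1) / ((N+1).factorial : ℝ) * (if j = k then 0 else qq Q (k - j) * bb Q N j) := by
    intro j
    by_cases h : j = k <;> simp [hF, h] <;> ring
  rw [tsum_congr hstep2, tsum_mul_left, ← bb_rec hQ N k]
  ring


end CPRec

open CPRec in
/-- **Recursion for compound Poisson probabilities (lattice case).**
Suppose `Q` is concentrated on `ℤ`, and write `CPo(θ,Q;k) = CPo(θ,Q)({k})`,
`q_j = Q({j})`.  Then for every `k ∈ ℤ` and `θ ≥ 0`,
`e^{(1-q₀)θ} CPo(θ,Q;k)
  = 1{k=0} + ∑_{j≠k} q_{k-j} ∫₀^θ e^{(1-q₀)t} CPo(t,Q;j) dt`;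
in particular, for `k ≠ 0`,
`CPo(θ,Q;k) = e^{-(1-q₀)θ} ∑_{j≠k} q_{k-j} ∫₀^θ e^{(1-q₀)t} CPo(t,Q;j) dt`. -/
theorem compoundPoisson_recursion
    (Q : Measure ℝ) [IsProbabilityMeasure Q]
    (hQ : Q {x : ℝ | ∃ m : ℤ, (m : ℝ) = x} = 1)
    (k : ℤ) (θ : ℝ) (hθ : 0 ≤ θ) :
    Real.exp ((1 - (Q {(0 : ℝ)}).toReal) * θ) * (CPo θ Q {(k : ℝ)}).toReal =
      (if k = 0 then 1 else 0) +
        ∑' j : ℤ, (if j = k then 0 else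
          (Q {((k - j : ℤ) : ℝ)}).toReal *
            ∫ t in (0 : ℝ)..θ,
              Real.exp ((1 - (Q {(0 : ℝ)}).toReal) * t) * (CPo t Q {(j : ℝ)}).toReal) ∧
    (k ≠ 0 →
      (CPo θ Q {(k : ℝ)}).toReal =
        Real.exp (-(1 - (Q {(0 : ℝ)}).toReal) * θ) *
          ∑' j : ℤ, (if j = k then 0 else
            (Q {((k - j : ℤ) : ℝ)}).toReal *
              ∫ t in (0 : ℝ)..θ,
                Real.exp ((1 - (Q {(0 : ℝ)}).toReal) * t) * (CPo t Q {(j : ℝ)}).toReal)) := by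
  have hQ' : Q Zs = 1 := by rw [← Zs_eq]; exact hQ
  have hq0 : (Q {(0 : ℝ)}).toReal = qq Q 0 := by norm_num [qq]
  have hq : ∀ i : ℤ, (Q {((i : ℤ) : ℝ)}).toReal = qq Q i := fun i => rfl
  rw [hq0]
  simp only [hq]
  have h1 := main_calc hQ' k hθ
  refine ⟨h1, fun hk => ?_⟩
  rw [if_neg hk, zero_add] at h1
  rw [← h1, ← mul_assoc, ← Real.exp_add,
    (by ring : -(1 - qq Q 0) * θ + (1 - qq Q 0) * θ = 0), Real.exp_zero, one_mul]
end
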